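/- Linear conserved quantity when q(0,1) = q(1,1) = q* > 0 (intermediate claim in the proof of Proposition 3.6): Assume a = b = q* with 0 < q* ≤ 1, and set C := A (1 - M_{S,0}) + B M_{S,0}. Then the solution of the macroscopic Dirac ODE system satisfies, for all t ≥ 0: N_I(t) · M_I(t) + C · N_S(t) = (1 - N_{S,0}) · M_{I,0} + C · N_{S,0}. -/

import Mathlib

open Set Filter

theorem eq_of_hasDerivWithinAt_Ici_eq_zero {E : Type*} [NormedAddCommGroup E] [NormedSpace ℝ E]
    {f : ℝ → E} {x₀ : ℝ} (hf : ∀ t ∈ Ici x₀, HasDerivWithinAt f 0 (Ici x₀) t) :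
    ∀ t ∈ Ici x₀, f t = f x₀ := by
  intro t ht
  refine constant_of_has_deriv_right_zero (b := t)
    (fun s hs => (hf s hs.1).continuousWithinAt.mono fun _ hy => hy.1)
    (fun s hs => (hf s hs.1).mono (Ici_subset_Ici.2 hs.1)) t ⟨ht, le_rfl⟩

theorem linear_conserved_general
    (a b A B NS0 MS0 MI0 : ℝ)
    (NS NI MS MI : ℝ → ℝ)
    (hNSinit : NS 0 = NS0)
    (hNIinit : NI 0 = 1 - NS0)
    (hMSinit : MS 0 = MS0)
    (hMIinit : MI 0 = MI0)
    (hdNS : ∀ t ∈ Ici (0:ℝ), HasDerivWithinAt NS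
      (-(NS t * NI t * MI t * (a * (1 - MS t) + b * MS t))) (Ici 0) t)
    (hdNI : ∀ t ∈ Ici (0:ℝ), HasDerivWithinAt NI
      (NS t * NI t * MI t * (a * (1 - MS t) + b * MS t)) (Ici 0) t)
    (hdMS : ∀ t ∈ Ici (0:ℝ), HasDerivWithinAt MS
      (NI t * MI t * (a - b) * (1 - MS t) * MS t) (Ici 0) t)
    (hdMI : ∀ t ∈ Ici (0:ℝ), HasDerivWithinAt MI
      (NS t * MI t * (A * a * (1 - MS t) + B * b * MS t
        - MI t * (a * (1 - MS t) + b * MS t))) (Ici 0) t)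
    (hab : a = b)
    : ∀ t ∈ Ici (0:ℝ),
      NI t * MI t + (A * (1 - MS0) + B * MS0) * NS t
        = (1 - NS0) * MI0 + (A * (1 - MS0) + B * MS0) * NS0 := by
  subst hab
  set C : ℝ := A * (1 - MS0) + B * MS0
  have hMS : ∀ t ∈ Ici (0:ℝ), MS t = MS0 := fun t ht =>
    hMSinit ▸ eq_of_hasDerivWithinAt_Ici_eq_zero
      (fun s hs => (hdMS s hs).congr_deriv (by ring)) t ht
  -- With `M_S ≡ M_{S,0}` the gain `N_S N_I M_I a C` of `N_I M_I` cancels the loss of `C N_S`.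
  have hF : ∀ t ∈ Ici (0:ℝ),
      HasDerivWithinAt (fun s => NI s * MI s + C * NS s) 0 (Ici 0) t := fun t ht =>
    (((hdNI t ht).mul (hdMI t ht)).add ((hdNS t ht).const_mul C)).congr_deriv
      (by rw [hMS t ht]; ring)
  intro t ht
  simpa [hNSinit, hNIinit, hMIinit] using eq_of_hasDerivWithinAt_Ici_eq_zero hF t ht

/-- Linear conserved quantity when `q(0,1) = q(1,1) = q* > 0` (intermediate claim in
the proof of Proposition 3.6), with `C = A(1 - M_{S,0}) + B M_{S,0}`. -/
theorem linear_conserved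
    (a b A B NS0 MS0 MI0 : ℝ)
    (ha0 : 0 ≤ a) (ha1 : a ≤ 1) (hb0 : 0 ≤ b) (hb1 : b ≤ 1)
    (hA0 : 0 < A) (hA1 : A ≤ 1) (hB0 : 0 < B) (hB1 : B ≤ 1)
    (NS NI MS MI : ℝ → ℝ)
    (hNSinit : NS 0 = NS0) (hNS0 : NS0 ∈ Ioo (0:ℝ) 1)
    (hNIinit : NI 0 = 1 - NS0)
    (hMSinit : MS 0 = MS0) (hMS0 : MS0 ∈ Ioo (0:ℝ) 1)
    (hMIinit : MI 0 = MI0) (hMI0 : MI0 ∈ Ioo (0:ℝ) 1)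
    (hdNS : ∀ t ∈ Ici (0:ℝ), HasDerivWithinAt NS
      (-(NS t * NI t * MI t * (a * (1 - MS t) + b * MS t))) (Ici 0) t)
    (hdNI : ∀ t ∈ Ici (0:ℝ), HasDerivWithinAt NI
      (NS t * NI t * MI t * (a * (1 - MS t) + b * MS t)) (Ici 0) t)
    (hdMS : ∀ t ∈ Ici (0:ℝ), HasDerivWithinAt MS
      (NI t * MI t * (a - b) * (1 - MS t) * MS t) (Ici 0) t)
    (hdMI : ∀ t ∈ Ici (0:ℝ), HasDerivWithinAt MI
      (NS t * MI t * (A * a * (1 - MS t) + B * b * MS t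
        - MI t * (a * (1 - MS t) + b * MS t))) (Ici 0) t)
    (hbnd : ∀ t ∈ Ici (0:ℝ), NS t ∈ Icc (0:ℝ) 1 ∧ NI t ∈ Icc (0:ℝ) 1 ∧
      MS t ∈ Icc (0:ℝ) 1 ∧ MI t ∈ Icc (0:ℝ) 1 ∧ NS t + NI t = 1)
    (hab : a = b) (hapos : 0 < a)
    : ∀ t ∈ Ici (0:ℝ),
      NI t * MI t + (A * (1 - MS0) + B * MS0) * NS t
        = (1 - NS0) * MI0 + (A * (1 - MS0) + B * MS0) * NS0 :=
  linear_conserved_general a b A B NS0 MS0 MI0 NS NI MS MI hNSinit hNIinit hMSinit hMIinit hdNS hdNI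
    hdMS hdMI hab
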